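/- Let M ⊂ V_C = V ⊕ V be a submanifold of a complexified symplectic vector space which is Lagrangian for both ω_1 and ω_2 (real and imaginary parts of the complex-bilinear extension ω^c of the symplectic form ω on V). Then the tangent space T_m M at each point is a complex subspace of V_C which is Lagrangian for ω^c, i.e., ω^c vanishes on T_m M and I(T_m M) = T_m M. (Linear algebra version: if L ⊂ V ⊕ V is a real subspace of dimension 2n = dim V on which both ω_1 and ω_2 vanish, and the restriction of g((x,y),(x',y')) = (1/2)(ω(x,y')+ω(x',y)) to L is nondegenerate, then L is I-invariant, where I(x,y)=(-y,x).) -/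

import Mathlib

/-!
On `L`, the vanishing of `ω₂` makes `g(p, q)` equal to `ω(p₁, q₂) = ω(q₁, p₂)`. Hence a vector of
`L` with vanishing first (or second) component is `g`-orthogonal to `L`, so it is zero, and since
`dim L = dim V` both projections `L → V` are isomorphisms. Given `(x, y) ∈ L`, take `q ∈ L` with
`q₁ = -y`. For every `p ∈ L`, `ω₁(q, p) = 0` and `ω₂((x, y), p) = 0` give
`ω(q₂, p₂) = ω(-y, p₁) = ω(p₁, y) = ω(x, p₂)`; as `p₂` ranges over all of `V`, nondegeneracy of `ω`
forces `q₂ = x`, i.e. `I(x, y) = q ∈ L`.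
-/

open Module

section

variable {K V : Type*} [Field K] [AddCommGroup V] [Module K V]
  {ω : V →ₗ[K] V →ₗ[K] K} {L : Submodule K (V × V)}

theorem eq_zero_of_mem_of_fst_eq_zero
    (hω₂ : ∀ p ∈ L, ∀ q ∈ L, ω p.1 q.2 - ω q.1 p.2 = 0)
    (hg : ∀ p ∈ L, (∀ q ∈ L, ω p.1 q.2 + ω q.1 p.2 = 0) → p = 0)
    {p : V × V} (hp : p ∈ L) (h : p.1 = 0) : p = 0 :=
  hg p hp fun q hq => by simpa [h] using hω₂ q hq p hp

theorem eq_zero_of_mem_of_snd_eq_zero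
    (hω₂ : ∀ p ∈ L, ∀ q ∈ L, ω p.1 q.2 - ω q.1 p.2 = 0)
    (hg : ∀ p ∈ L, (∀ q ∈ L, ω p.1 q.2 + ω q.1 p.2 = 0) → p = 0)
    {p : V × V} (hp : p ∈ L) (h : p.2 = 0) : p = 0 :=
  hg p hp fun q hq => by simpa [h] using hω₂ p hp q hq

section FiniteDimensional

variable [FiniteDimensional K V]

theorem exists_mem_fst_eq (hdim : finrank K L = finrank K V)
    (hω₂ : ∀ p ∈ L, ∀ q ∈ L, ω p.1 q.2 - ω q.1 p.2 = 0)
    (hg : ∀ p ∈ L, (∀ q ∈ L, ω p.1 q.2 + ω q.1 p.2 = 0) → p = 0)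
    (v : V) : ∃ p ∈ L, p.1 = v := by
  have hinj : Function.Injective ((LinearMap.fst K V V).domRestrict L) := by
    rw [← LinearMap.ker_eq_bot, LinearMap.ker_eq_bot']
    exact fun p hp => Subtype.ext (eq_zero_of_mem_of_fst_eq_zero hω₂ hg p.2 hp)
  obtain ⟨p, hp⟩ := (LinearMap.injective_iff_surjective_of_finrank_eq_finrank hdim).mp hinj v
  exact ⟨p, p.2, hp⟩

theorem exists_mem_snd_eq (hdim : finrank K L = finrank K V)
    (hω₂ : ∀ p ∈ L, ∀ q ∈ L, ω p.1 q.2 - ω q.1 p.2 = 0)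
    (hg : ∀ p ∈ L, (∀ q ∈ L, ω p.1 q.2 + ω q.1 p.2 = 0) → p = 0)
    (v : V) : ∃ p ∈ L, p.2 = v := by
  have hinj : Function.Injective ((LinearMap.snd K V V).domRestrict L) := by
    rw [← LinearMap.ker_eq_bot, LinearMap.ker_eq_bot']
    exact fun p hp => Subtype.ext (eq_zero_of_mem_of_snd_eq_zero hω₂ hg p.2 hp)
  obtain ⟨p, hp⟩ := (LinearMap.injective_iff_surjective_of_finrank_eq_finrank hdim).mp hinj v
  exact ⟨p, p.2, hp⟩

theorem neg_snd_fst_mem (hω : ω.IsAlt) (hsep : ω.SeparatingLeft)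
    (hdim : finrank K L = finrank K V)
    (hω₁ : ∀ p ∈ L, ∀ q ∈ L, ω p.1 q.1 - ω p.2 q.2 = 0)
    (hω₂ : ∀ p ∈ L, ∀ q ∈ L, ω p.1 q.2 - ω q.1 p.2 = 0)
    (hg : ∀ p ∈ L, (∀ q ∈ L, ω p.1 q.2 + ω q.1 p.2 = 0) → p = 0)
    {x y : V} (h : (x, y) ∈ L) : (-y, x) ∈ L := by
  obtain ⟨q, hq, hq₁⟩ := exists_mem_fst_eq hdim hω₂ hg (-y)
  have hq₂ : q.2 - x = 0 := hsep _ fun u => by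
    obtain ⟨p, hp, rfl⟩ := exists_mem_snd_eq hdim hω₂ hg u
    have h₁ : ω (-y) p.1 - ω q.2 p.2 = 0 := hq₁ ▸ hω₁ q hq p hp
    have h₂ : ω x p.2 - ω p.1 y = 0 := hω₂ _ h p hp
    have hskew : -ω y p.1 = ω p.1 y := hω.neg y p.1
    simp only [map_neg, LinearMap.neg_apply, map_sub, LinearMap.sub_apply] at h₁ ⊢
    linear_combination -h₁ - h₂ + hskew
  rwa [← hq₁, ← sub_eq_zero.mp hq₂]

end FiniteDimensional

end

theorem stmt19 {V : Type*} [AddCommGroup V] [Module ℝ V] [FiniteDimensional ℝ V]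
    (n : ℕ) (hV : finrank ℝ V = 2 * n)
    (ω : V →ₗ[ℝ] V →ₗ[ℝ] ℝ) (halt : ∀ v, ω v v = 0)
    (hnd : ∀ v, (∀ u, ω v u = 0) → v = 0)
    (L : Submodule ℝ (V × V)) (hLdim : finrank ℝ L = 2 * n)
    (hω1 : ∀ p ∈ L, ∀ q ∈ L, ω p.1 q.1 - ω p.2 q.2 = 0)
    (hω2 : ∀ p ∈ L, ∀ q ∈ L, ω p.1 q.2 - ω q.1 p.2 = 0)
    (hg : ∀ p ∈ L, (∀ q ∈ L, (1 / 2 : ℝ) * (ω p.1 q.2 + ω q.1 p.2) = 0) → p = 0) :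
    Submodule.map ((-(LinearMap.snd ℝ V V)).prod (LinearMap.fst ℝ V V)) L = L := by
  have hg' : ∀ p ∈ L, (∀ q ∈ L, ω p.1 q.2 + ω q.1 p.2 = 0) → p = 0 :=
    fun p hp h => hg p hp fun q hq => by rw [h q hq, mul_zero]
  have hI : ∀ z ∈ L, ((-z.2, z.1) : V × V) ∈ L := fun z hz =>
    neg_snd_fst_mem halt hnd (hLdim.trans hV.symm) hω1 hω2 hg' hz
  apply le_antisymm
  · rintro _ ⟨z, hz, rfl⟩
    exact hI z hz
  · intro z hz
    refine ⟨-(-z.2, z.1), L.neg_mem (hI z hz), ?_⟩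
    simp
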